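/- arXiv:1901.05054 — 2 statements merged into one kernel-verified Lean document; each statement's English description precedes it below -/
import Mathlib

section
/- Let A_n be the autonomous operator sequence defined by A_1 = a_0 and A_{n+1} = Y_n(A_1,...,A_n; a_1,...,a_n). If a_n = α^n for all n ≥ 0 (with α a real number), then A_n = α^{n-1}(n-1)! for all n ≥ 1. -/
open Finset

/-- Partial Bell polynomials `B_{n,k}(b₁,…)`, via the standard recurrence
`B_{n+1,k+1} = ∑_{i=0}^{n} C(n,i) b_{i+1} B_{n-i,k}`. -/
noncomputable def partialBell {R : Type*} [Ring R] : ℕ → ℕ → (ℕ → R) → R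
  | 0, 0, _ => 1
  | _ + 1, 0, _ => 0
  | 0, _ + 1, _ => 0
  | n + 1, k + 1, b =>
      ∑ i ∈ Finset.range (n + 1), (n.choose i : R) * b (i + 1) * partialBell (n - i) k b
  termination_by n k _ => k

/-- The `n`-th (complete) Bell polynomial `Y_n(b₁,…,b_n; a₁,…,a_n) = ∑_{k=1}^n B_{n,k} a_k`. -/
noncomputable def bellY {R : Type*} [Ring R] (n : ℕ) (b a : ℕ → R) : R :=
  ∑ k ∈ Finset.Icc 1 n, partialBell n k b * a k

/-- The autonomous operator: `A₁ = a₀`, `A_{n+1} = Y_n(A₁,…,A_n; a₁,…,a_n)`. -/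
noncomputable def autoA {R : Type*} [Ring R] (a : ℕ → R) : ℕ → R
  | 0 => 0
  | 1 => a 0
  | n + 2 => bellY (n + 1) (fun k => if h : k < n + 2 then autoA a k else 0) a
  termination_by n => n

/-- Generalized binomial coefficient `x(x-1)⋯(x-n+1)/n!`. -/
noncomputable def genChoose (x : ℝ) (n : ℕ) : ℝ :=
  (∏ k ∈ Finset.range n, (x - k)) / n.factorial

/-- Rising factorial (Pochhammer symbol) `(x)ₙ = x(x+1)⋯(x+n-1)`. -/
noncomputable def risingFac (x : ℝ) (n : ℕ) : ℝ :=
  ∏ k ∈ Finset.range n, (x + k)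

lemma partialBell_congr {R : Type*} [Ring R] :
    ∀ k n (b b' : ℕ → R), (∀ j, 1 ≤ j → j ≤ n → b j = b' j) →
      partialBell n k b = partialBell n k b' := by
  intro k
  induction k with
  | zero =>
    intro n b b' _
    cases n with
    | zero => simp [partialBell]
    | succ m => rw [partialBell, partialBell]
  | succ k ih =>
    intro n b b' h
    cases n with
    | zero => rw [partialBell, partialBell]
    | succ m =>
      rw [partialBell, partialBell]
      refine Finset.sum_congr rfl fun i hi => ?_
      simp only [Finset.mem_range] at hi
      rw [h (i+1) (Nat.le_add_left 1 i) (by omega),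
        ih (m - i) b b' (fun j h1 h2 => h j h1 (by omega))]

lemma partialBell_eq_zero {R : Type*} [Ring R] :
    ∀ k n (b : ℕ → R), n < k → partialBell n k b = 0 := by
  intro k
  induction k with
  | zero => intro n b h; omega
  | succ k ih =>
    intro n b h
    cases n with
    | zero => rw [partialBell]
    | succ m =>
      rw [partialBell]
      refine Finset.sum_eq_zero fun i hi => ?_
      rw [ih (m - i) b (by omega), mul_zero]

lemma bell_geom_sum (α : ℝ) :
    ∀ n : ℕ, ∑ k ∈ Finset.range (n + 1),
      partialBell n k (fun j => α ^ (j - 1) * (j - 1).factorial) * α ^ k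
      = α ^ n * n.factorial := by
  intro n
  induction n using Nat.strong_induction_on with
  | _ n ih =>
    set b : ℕ → ℝ := fun j => α ^ (j - 1) * (j - 1).factorial with hb
    cases n with
    | zero => simp [partialBell]
    | succ m =>
      rw [Finset.sum_range_succ']
      have h0 : partialBell (m + 1) 0 b * α ^ 0 = 0 := by rw [partialBell]; ring
      rw [h0, add_zero]
      have hstep : ∀ k ∈ Finset.range (m + 1),
          partialBell (m + 1) (k + 1) b * α ^ (k + 1)
          = ∑ i ∈ Finset.range (m + 1),
              (m.choose i : ℝ) * b (i + 1) * (partialBell (m - i) k b * α ^ k) * α := by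
        intro k _
        rw [partialBell, Finset.sum_mul]
        refine Finset.sum_congr rfl fun i _ => ?_
        ring
      rw [Finset.sum_congr rfl hstep, Finset.sum_comm]
      have hinner : ∀ i ∈ Finset.range (m + 1),
          (∑ k ∈ Finset.range (m + 1),
            (m.choose i : ℝ) * b (i + 1) * (partialBell (m - i) k b * α ^ k) * α)
          = (m.choose i : ℝ) * b (i + 1) * (α ^ (m - i) * (m - i).factorial) * α := by
        intro i hi
        simp only [Finset.mem_range] at hi
        have hsum : ∑ k ∈ Finset.range (m + 1), partialBell (m - i) k b * α ^ k
            = α ^ (m - i) * (m - i).factorial := by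
          rw [Finset.range_eq_Ico, ← Finset.sum_Ico_consecutive _
            (Nat.zero_le (m - i + 1)) (by omega : m - i + 1 ≤ m + 1)]
          have hz : ∑ k ∈ Finset.Ico (m - i + 1) (m + 1), partialBell (m - i) k b * α ^ k
              = 0 := Finset.sum_eq_zero fun k hk => by
            simp only [Finset.mem_Ico] at hk
            rw [partialBell_eq_zero k (m - i) b (by omega), zero_mul]
          rw [hz, add_zero, ← Finset.range_eq_Ico, ih (m - i) (by omega)]
        calc ∑ k ∈ Finset.range (m + 1),
              (m.choose i : ℝ) * b (i + 1) * (partialBell (m - i) k b * α ^ k) * α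
            = (m.choose i : ℝ) * b (i + 1)
              * (∑ k ∈ Finset.range (m + 1), partialBell (m - i) k b * α ^ k) * α := by
              rw [Finset.mul_sum, Finset.sum_mul]
          _ = (m.choose i : ℝ) * b (i + 1) * (α ^ (m - i) * (m - i).factorial) * α := by
              rw [hsum]
      rw [Finset.sum_congr rfl hinner]
      have hterm : ∀ i ∈ Finset.range (m + 1),
          (m.choose i : ℝ) * b (i + 1) * (α ^ (m - i) * (m - i).factorial) * α
          = α ^ (m + 1) * m.factorial := by
        intro i hi
        simp only [Finset.mem_range] at hi
        have hfac : (m.choose i : ℝ) * i.factorial * (m - i).factorial = m.factorial := by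
          rw [← Nat.cast_mul, ← Nat.cast_mul, Nat.choose_mul_factorial_mul_factorial (by omega)]
        have hpow : α ^ i * α ^ (m - i) * α = α ^ (m + 1) := by
          rw [← pow_add, ← pow_succ]; congr 1; omega
        simp only [hb, Nat.add_sub_cancel]
        calc (m.choose i : ℝ) * (α ^ i * i.factorial) * (α ^ (m - i) * (m - i).factorial) * α
            = ((m.choose i : ℝ) * i.factorial * (m - i).factorial)
              * (α ^ i * α ^ (m - i) * α) := by ring
          _ = α ^ (m + 1) * m.factorial := by rw [hfac, hpow]; ring
      rw [Finset.sum_congr rfl hterm, Finset.sum_const, Finset.card_range, nsmul_eq_mul]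
      rw [Nat.factorial_succ, Nat.cast_mul]
      ring

/-- The autonomous operator applied to the geometric sequence `(αⁿ)`:
`A_n = α^{n-1} (n-1)!` for `n ≥ 1`. -/
theorem autoA_geometric (α : ℝ) :
    ∀ n : ℕ, 1 ≤ n →
      autoA (fun k => α ^ k) n = α ^ (n - 1) * (n - 1).factorial := by
  intro n
  induction n using Nat.strong_induction_on with
  | _ n ih =>
    intro hn
    match n, hn with
    | 1, _ => simp [autoA]
    | (m + 2), _ =>
      rw [autoA, bellY]
      set b : ℕ → ℝ := fun j => α ^ (j - 1) * (j - 1).factorial with hb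
      have hcongr : ∀ k, partialBell (m + 1) k
          (fun k => if h : k < m + 2 then autoA (fun k => α ^ k) k else 0)
          = partialBell (m + 1) k b := by
        intro k
        refine partialBell_congr k (m + 1) _ _ fun j h1 h2 => ?_
        have hj : j < m + 2 := by omega
        simp only [hj, dif_pos]
        exact ih j (by omega) h1
      have : ∑ k ∈ Finset.Icc 1 (m + 1),
          partialBell (m + 1) k
            (fun k => if h : k < m + 2 then autoA (fun k => α ^ k) k else 0) * α ^ k
          = ∑ k ∈ Finset.Icc 1 (m + 1), partialBell (m + 1) k b * α ^ k := by
        exact Finset.sum_congr rfl fun k _ => by rw [hcongr k]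
      rw [this]
      have hIcc : ∑ k ∈ Finset.Icc 1 (m + 1), partialBell (m + 1) k b * α ^ k
          = ∑ k ∈ Finset.range (m + 2), partialBell (m + 1) k b * α ^ k := by
        rw [Finset.range_eq_Ico, show Finset.Ico 0 (m + 2) = insert 0 (Finset.Icc 1 (m + 1)) by
          ext x; simp [Finset.mem_Ico, Finset.mem_Icc]; omega]
        rw [Finset.sum_insert (by simp)]
        rw [show partialBell (m + 1) 0 b = 0 from by rw [partialBell]]
        ring
      rw [hIcc, bell_geom_sum α (m + 1)]
      simp
end

section
/- Let (f_n)_{n≥0} be elements of a normed ring with ‖f_n‖ ≤ n! for all n ≥ 0. Define A_1 = f_0 and A_{n+1} = Y_n(A_1,...,A_n; f_1,...,f_n). Then ‖A_n‖ ≤ (-1)^{n+1} 2^n \binom{1/2}{n} n! for all n ≥ 1, and for 0 ≤ t < 1/2, \sum_{n≥1} ‖A_n‖ t^n/n! ≤ 1 - \sqrt{1-2t}. -/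
open Finset

/-!
The numbers `dₙ = 1 · 3 ⋯ (2n - 3) = risingFacStep 2 1 (n - 1)` majorize `‖Aₙ‖`. Since the Bell
polynomials have nonnegative coefficients, induction gives
`‖A_{n+1}‖ ≤ Y_n(d₁, …, dₙ; 1!, …, n!)`, and the right side is exactly `d_{n+1}`: more generally
`∑ₖ B_{n,k}(d) (x)ₖ = x (x + 2) ⋯ (x + 2n - 2)`, which follows by induction on `n` from the
recurrence for `B_{n,k}` and the Chu–Vandermonde identity for rising factorials of step `2`.
Finally `dₙ = (-1)^{n+1} 2ⁿ C(1/2, n) n!`, so `∑ dₙ tⁿ / n!` is the binomial series of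
`1 - √(1 - 2t)`.
-/

noncomputable def risingFacStep (h x : ℝ) (n : ℕ) : ℝ :=
  ∏ k ∈ range n, (x + k * h)

section risingFacStep

variable (h x : ℝ) (n : ℕ)

lemma risingFacStep_zero : risingFacStep h x 0 = 1 := prod_range_zero _

lemma risingFacStep_succ : risingFacStep h x (n + 1) = risingFacStep h x n * (x + n * h) :=
  prod_range_succ _ _

lemma risingFacStep_succ' : risingFacStep h x (n + 1) = x * risingFacStep h (x + h) n := by
  simp only [risingFacStep, prod_range_succ', Nat.cast_succ, Nat.cast_zero, zero_mul, add_zero,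
    mul_comm x, add_mul, one_mul, add_assoc, add_comm h]

lemma risingFacStep_one_one : risingFacStep 1 1 n = n.factorial := by
  simp only [risingFacStep, mul_one, add_comm (1 : ℝ)]
  exact_mod_cast prod_range_add_one_eq_factorial n

theorem risingFacStep_add (y : ℝ) :
    risingFacStep h (x + y) n = ∑ ij ∈ antidiagonal n,
      (n.choose ij.1 : ℝ) * (risingFacStep h x ij.1 * risingFacStep h y ij.2) := by
  induction n with
  | zero => simp [risingFacStep_zero]
  | succ n ih =>
    rw [sum_antidiagonal_choose_succ_mul (fun i j => risingFacStep h x i * risingFacStep h y j),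
      ← sum_add_distrib, risingFacStep_succ, ih, sum_mul]
    refine sum_congr rfl fun ij hij => ?_
    rw [HasAntidiagonal.mem_antidiagonal] at hij
    rw [← Nat.choose_symm_of_eq_add hij.symm, risingFacStep_succ, risingFacStep_succ, ← hij]
    push_cast
    ring

end risingFacStep

section partialBell

variable {R : Type*}

lemma partialBell_succ_zero [Ring R] (n : ℕ) (b : ℕ → R) : partialBell (n + 1) 0 b = 0 := by
  rw [partialBell]

lemma partialBell_succ_succ [Ring R] (n k : ℕ) (b : ℕ → R) :
    partialBell (n + 1) (k + 1) b =
      ∑ i ∈ range (n + 1), (n.choose i : R) * b (i + 1) * partialBell (n - i) k b := by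
  rw [partialBell]

lemma partialBell_eq_zero_of_lt [Ring R] (b : ℕ → R) {n k : ℕ} (h : n < k) :
    partialBell n k b = 0 := by
  induction k generalizing n with
  | zero => omega
  | succ k ih =>
    cases n with
    | zero => rw [partialBell]
    | succ n =>
      rw [partialBell_succ_succ]
      exact sum_eq_zero fun i _ => by rw [ih (by omega), mul_zero]

lemma partialBell_succ_one [Ring R] (n : ℕ) (b : ℕ → R) : partialBell (n + 1) 1 b = b (n + 1) := by
  rw [partialBell_succ_succ, sum_eq_single_of_mem n (self_mem_range_succ n)]
  · rw [Nat.sub_self, partialBell, Nat.choose_self, Nat.cast_one, one_mul, mul_one]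
  · intro i hi hin
    obtain ⟨m, hm⟩ := Nat.exists_eq_add_one_of_ne_zero (by grind : n - i ≠ 0)
    rw [hm, partialBell_succ_zero, mul_zero]

lemma sum_range_partialBell_mul_of_lt [Ring R] (b g : ℕ → R) {n N : ℕ} (h : n < N) :
    ∑ k ∈ range N, partialBell n k b * g k = ∑ k ∈ range (n + 1), partialBell n k b * g k := by
  refine (sum_subset (range_subset_range.mpr h) fun k _ hk => ?_).symm
  rw [partialBell_eq_zero_of_lt b (by simpa using hk), zero_mul]

lemma bellY_succ_eq_sum_range [Ring R] (n : ℕ) (b a : ℕ → R) :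
    bellY (n + 1) b a = ∑ k ∈ range (n + 2), partialBell (n + 1) k b * a k := by
  rw [bellY, sum_range_succ', partialBell_succ_zero, zero_mul, add_zero, range_eq_Ico,
    sum_Ico_add' (fun k => partialBell (n + 1) k b * a k)]
  rfl

/-- The restriction `1 ≤ k` avoids `partialBell 0 0 b = 1`, whose norm may exceed `1`. -/
lemma norm_partialBell_le [NormedRing R] {b : ℕ → R} {c : ℕ → ℝ} {n : ℕ}
    (hbc : ∀ m ∈ Icc 1 n, ‖b m‖ ≤ c m) {k : ℕ} (hk : 1 ≤ k) :
    ‖partialBell n k b‖ ≤ partialBell n k c := by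
  obtain ⟨j, rfl⟩ := Nat.exists_eq_add_of_le' hk
  induction j generalizing n with
  | zero =>
    cases n with
    | zero => simp [partialBell]
    | succ n =>
      rw [partialBell_succ_one, partialBell_succ_one]
      exact hbc _ (by simp)
  | succ j ih =>
    cases n with
    | zero => simp [partialBell]
    | succ n =>
      rw [partialBell_succ_succ, partialBell_succ_succ]
      refine (norm_sum_le _ _).trans (sum_le_sum fun i hi => ?_)
      have hin : i ≤ n := Nat.lt_succ_iff.mp (mem_range.mp hi)
      have hb := hbc (i + 1) (by simp [hin])
      have hB := ih (n := n - i) (fun m hm => hbc m (by simp at hm ⊢; omega)) (by omega)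
      calc ‖(n.choose i : R) * b (i + 1) * partialBell (n - i) (j + 1) b‖
          ≤ n.choose i * (‖b (i + 1)‖ * ‖partialBell (n - i) (j + 1) b‖) := by
            rw [mul_assoc, ← nsmul_eq_mul]
            exact norm_nsmul_le.trans (by gcongr; exact norm_mul_le _ _)
        _ ≤ n.choose i * c (i + 1) * partialBell (n - i) (j + 1) c := by
            rw [mul_assoc]
            gcongr
            exact (norm_nonneg _).trans hb

lemma norm_bellY_le [NormedRing R] {b a : ℕ → R} {c α : ℕ → ℝ} {n : ℕ}
    (hbc : ∀ m ∈ Icc 1 n, ‖b m‖ ≤ c m) (haα : ∀ k ∈ Icc 1 n, ‖a k‖ ≤ α k) :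
    ‖bellY n b a‖ ≤ bellY n c α := by
  refine (norm_sum_le _ _).trans (sum_le_sum fun k hk => ?_)
  have hB := norm_partialBell_le hbc (mem_Icc.mp hk).1
  exact (norm_mul_le _ _).trans
    (mul_le_mul hB (haα k hk) (norm_nonneg _) ((norm_nonneg _).trans hB))

end partialBell

theorem sum_partialBell_mul_risingFacStep (h : ℝ) (n : ℕ) (x : ℝ) :
    ∑ k ∈ range (n + 1),
        partialBell n k (fun m => risingFacStep h (h - 1) (m - 1)) * risingFacStep 1 x k =
      risingFacStep h x n := by
  set d : ℕ → ℝ := fun m => risingFacStep h (h - 1) (m - 1)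
  induction n using Nat.strong_induction_on generalizing x with
  | _ n ih =>
    cases n with
    | zero => simp [partialBell, risingFacStep_zero]
    | succ n =>
      have inner : ∀ i ∈ range (n + 1),
          ∑ k ∈ range (n + 1), partialBell (n - i) k d * risingFacStep 1 (x + 1) k =
            risingFacStep h (x + 1) (n - i) := fun i _ => by
        rw [sum_range_partialBell_mul_of_lt d _ (by omega), ih (n - i) (by omega)]
      calc ∑ k ∈ range (n + 2), partialBell (n + 1) k d * risingFacStep 1 x k
          = ∑ k ∈ range (n + 1), partialBell (n + 1) (k + 1) d * risingFacStep 1 x (k + 1) := by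
            rw [sum_range_succ', partialBell_succ_zero, zero_mul, add_zero]
        _ = x * ∑ i ∈ range (n + 1), (n.choose i : ℝ) * d (i + 1) *
              ∑ k ∈ range (n + 1), partialBell (n - i) k d * risingFacStep 1 (x + 1) k := by
            simp only [partialBell_succ_succ, risingFacStep_succ', sum_mul, mul_sum]
            rw [sum_comm]
            exact sum_congr rfl fun _ _ => sum_congr rfl fun _ _ => by ring
        _ = x * risingFacStep h (x + h) n := by
            rw [sum_congr rfl fun i hi => by rw [inner i hi],
              show x + h = (h - 1) + (x + 1) by ring, risingFacStep_add,
              Nat.sum_antidiagonal_eq_sum_range_succ_mk]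
            simp only [d, Nat.add_sub_cancel, mul_assoc]
        _ = risingFacStep h x (n + 1) := (risingFacStep_succ' h x n).symm

theorem norm_autoA_succ_le {R : Type*} [NormedRing R] {f : ℕ → R}
    (hf : ∀ n : ℕ, ‖f n‖ ≤ n.factorial) (n : ℕ) : ‖autoA f (n + 1)‖ ≤ risingFacStep 2 1 n := by
  induction n using Nat.strong_induction_on with
  | _ n ih =>
    cases n with
    | zero => simpa [autoA, risingFacStep_zero] using hf 0
    | succ n =>
      have hA : ∀ m ∈ Icc 1 (n + 1), ‖(fun k => if _ : k < n + 2 then autoA f k else 0) m‖ ≤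
          risingFacStep 2 (2 - 1) (m - 1) := fun m hm => by
        obtain ⟨j, rfl⟩ := Nat.exists_eq_add_of_le' (mem_Icc.mp hm).1
        simpa [show j + 1 < n + 2 by simp at hm; omega, show (2 : ℝ) - 1 = 1 by norm_num]
          using ih j (by simp at hm; omega)
      rw [autoA]
      refine (norm_bellY_le hA fun k _ => hf k).trans_eq ?_
      rw [bellY_succ_eq_sum_range, ← sum_partialBell_mul_risingFacStep]
      simp only [risingFacStep_one_one]

lemma genChoose_mul_factorial (x : ℝ) (n : ℕ) :
    genChoose x n * n.factorial = ∏ k ∈ range n, (x - k) :=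
  div_mul_cancel₀ _ (by positivity)

open Polynomial in
lemma genChoose_eq_ringChoose (x : ℝ) (n : ℕ) : genChoose x n = Ring.choose x n := by
  rw [Ring.choose_eq_smul, genChoose, ← descPochhammer_eval_eq_prod_range, smul_eq_mul,
    div_eq_inv_mul, ← descPochhammer_map (algebraMap ℤ ℝ), eval_map_algebraMap, aeval_eq_smeval]

lemma hasSum_genChoose_mul_pow (a : ℝ) {x : ℝ} (hx : |x| < 1) :
    HasSum (fun n => genChoose a n * x ^ n) ((1 + x) ^ a) := by
  have := (Real.one_add_rpow_hasFPowerSeriesOnBall_zero (a := a)).hasSum (y := x)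
    (by simpa [Metric.eball_coe, edist_dist] using hx)
  simp only [binomialSeries, FormalMultilinearSeries.ofScalars_apply_eq, zero_add,
    smul_eq_mul] at this
  simpa [genChoose_eq_ringChoose, mul_comm] using this

lemma risingFacStep_two_one_eq_genChoose (n : ℕ) :
    risingFacStep 2 1 n =
      (-1) ^ (n + 1 + 1) * 2 ^ (n + 1) * genChoose (1 / 2) (n + 1) * (n + 1).factorial := by
  rw [mul_assoc _ (genChoose _ _), genChoose_mul_factorial]
  induction n with
  | zero => norm_num [risingFacStep_zero]
  | succ n ih =>
    rw [risingFacStep_succ, ih, prod_range_succ _ (n + 1)]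
    push_cast
    ring

lemma hasSum_risingFacStep_two_one_mul_pow_div_factorial {t : ℝ} (ht₀ : 0 ≤ t) (ht : t < 1 / 2) :
    HasSum (fun n => risingFacStep 2 1 n * t ^ (n + 1) / (n + 1).factorial)
      (1 - Real.sqrt (1 - 2 * t)) := by
  have hS := (hasSum_nat_add_iff' 1).mpr
    (hasSum_genChoose_mul_pow (1 / 2) (x := -2 * t) (by rw [abs_lt]; constructor <;> linarith))
  rw [← Real.sqrt_eq_rpow] at hS
  have hterm (n : ℕ) : risingFacStep 2 1 n * t ^ (n + 1) / (n + 1).factorial =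
      -(genChoose (1 / 2) (n + 1) * (-2 * t) ^ (n + 1)) := by
    rw [risingFacStep_two_one_eq_genChoose, neg_mul, neg_pow (2 * t), mul_pow]
    field_simp
    ring
  have hsum : -(√(1 + -2 * t) - ∑ i ∈ range 1, genChoose (1 / 2) i * (-2 * t) ^ i) =
      1 - √(1 - 2 * t) := by
    norm_num [genChoose, sub_eq_add_neg]
  simpa only [hterm, hsum] using hS.neg

/-- If `‖fₙ‖ ≤ n!`, then `‖Aₙ‖ ≤ (-1)^{n+1} 2ⁿ C(1/2,n) n!`, and for `0 ≤ t < 1/2`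
the series `∑_{n≥1} ‖Aₙ‖ tⁿ/n!` is bounded by `1 - √(1-2t)`. -/
theorem autoA_bound_factorial {R : Type*} [NormedRing R]
    (f : ℕ → R) (hf : ∀ n : ℕ, ‖f n‖ ≤ n.factorial) :
    (∀ n : ℕ, 1 ≤ n →
      ‖autoA f n‖ ≤ (-1) ^ (n + 1) * 2 ^ n * genChoose (1 / 2) n * n.factorial) ∧
    (∀ t : ℝ, 0 ≤ t → t < 1 / 2 →
      ∑' n : ℕ, ‖autoA f (n + 1)‖ * t ^ (n + 1) / (n + 1).factorial ≤
        1 - Real.sqrt (1 - 2 * t)) := by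
  refine ⟨fun n hn => ?_, fun t ht₀ ht => ?_⟩
  · obtain ⟨m, rfl⟩ := Nat.exists_eq_add_of_le' hn
    exact (norm_autoA_succ_le hf m).trans_eq (risingFacStep_two_one_eq_genChoose m)
  · have hS := hasSum_risingFacStep_two_one_mul_pow_div_factorial ht₀ ht
    have hle (n : ℕ) : ‖autoA f (n + 1)‖ * t ^ (n + 1) / (n + 1).factorial ≤
        risingFacStep 2 1 n * t ^ (n + 1) / (n + 1).factorial := by
      gcongr
      exact norm_autoA_succ_le hf n
    exact hasSum_le hle (hS.summable.of_nonneg_of_le (fun n => by positivity) hle).hasSum hS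
end
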